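/- Suppose z ∈ ℂ∖{0} is such that the nonnegative matrix series N1(|z|), G1(|z|) and R1(|z|) converge entrywise, and define H1(z) = A_{*,0}(z) + A_{*,1}(z)·N1(z)·A_{*,−1}(z). Then both I − H1(z) and N1(z) are invertible and N1(z) = (I − H1(z))^{−1}. -/

import Mathlib

namespace QBDSeries

/-- The index set `H = {-1, 0, 1}`. -/
def Hs : Finset ℤ := {-1, 0, 1}

/-- Partial sum of the first `k` entries of a sequence `σ : Fin n → ℤ`. -/
def psum {n : ℕ} (σ : Fin n → ℤ) (k : ℕ) : ℤ :=
  ∑ i ∈ Finset.univ.filter (fun i : Fin n => (i : ℕ) < k), σ i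

/-- Condition defining the index set `𝓘_n`. -/
def condQ (n : ℕ) (σ : Fin n → ℤ) : Prop :=
  (∀ k : ℕ, 1 ≤ k → k ≤ n - 1 → 0 ≤ psum σ k) ∧ psum σ n = 0

/-- Condition defining the index set `𝓘_{D,n}`. -/
def condD (n : ℕ) (σ : Fin n → ℤ) : Prop :=
  (∀ k : ℕ, 1 ≤ k → k ≤ n - 1 → 0 ≤ psum σ k) ∧ psum σ n = -1

/-- Condition defining the index set `𝓘_{U,n}`. -/
def condU (n : ℕ) (σ : Fin n → ℤ) : Prop :=
  (∀ k : ℕ, 1 ≤ k → k ≤ n - 1 → 1 ≤ psum σ k) ∧ psum σ n = 1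

/-- `A_{*,i}(z) = Σ_{j∈H} A_{j,i} z^j` over `ℂ`. -/
noncomputable def AstarC (s0 : ℕ) (A : ℤ → ℤ → Matrix (Fin s0) (Fin s0) ℝ) (z : ℂ) (i : ℤ) :
    Matrix (Fin s0) (Fin s0) ℂ :=
  ∑ j ∈ Hs, (z ^ j) • (A j i).map Complex.ofReal

/-- `A_{*,i}(z) = Σ_{j∈H} A_{j,i} z^j` over `ℝ`. -/
noncomputable def AstarR (s0 : ℕ) (A : ℤ → ℤ → Matrix (Fin s0) (Fin s0) ℝ) (z : ℝ) (i : ℤ) :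
    Matrix (Fin s0) (Fin s0) ℝ :=
  ∑ j ∈ Hs, (z ^ j) • A j i

open Classical in
/-- `Σ_{σ ∈ cond} A_{*,σ1}(z)⋯A_{*,σn}(z)` over `ℂ`. -/
noncomputable def pathSumC (s0 : ℕ) (A : ℤ → ℤ → Matrix (Fin s0) (Fin s0) ℝ) (z : ℂ) (n : ℕ)
    (cond : (Fin n → ℤ) → Prop) : Matrix (Fin s0) (Fin s0) ℂ :=
  ∑ σ : Fin n → {x : ℤ // x ∈ Hs},
    if cond (fun k => (σ k : ℤ)) then (List.ofFn fun k : Fin n => AstarC s0 A z (σ k : ℤ)).prod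
    else 0

open Classical in
/-- `Σ_{σ ∈ cond} A_{*,σ1}(z)⋯A_{*,σn}(z)` over `ℝ`. -/
noncomputable def pathSumR (s0 : ℕ) (A : ℤ → ℤ → Matrix (Fin s0) (Fin s0) ℝ) (z : ℝ) (n : ℕ)
    (cond : (Fin n → ℤ) → Prop) : Matrix (Fin s0) (Fin s0) ℝ :=
  ∑ σ : Fin n → {x : ℤ // x ∈ Hs},
    if cond (fun k => (σ k : ℤ)) then (List.ofFn fun k : Fin n => AstarR s0 A z (σ k : ℤ)).prod
    else 0

/-- `Q^{(n)}(z)` (complex); `Q^{(0)}(z) = I`. -/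
noncomputable def QmatC (s0 : ℕ) (A : ℤ → ℤ → Matrix (Fin s0) (Fin s0) ℝ) (z : ℂ) (n : ℕ) :
    Matrix (Fin s0) (Fin s0) ℂ := pathSumC s0 A z n (condQ n)

/-- `D^{(n)}(z)` (complex); it vanishes for `n = 0`. -/
noncomputable def DmatC (s0 : ℕ) (A : ℤ → ℤ → Matrix (Fin s0) (Fin s0) ℝ) (z : ℂ) (n : ℕ) :
    Matrix (Fin s0) (Fin s0) ℂ := pathSumC s0 A z n (condD n)

/-- `U^{(n)}(z)` (complex); it vanishes for `n = 0`. -/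
noncomputable def UmatC (s0 : ℕ) (A : ℤ → ℤ → Matrix (Fin s0) (Fin s0) ℝ) (z : ℂ) (n : ℕ) :
    Matrix (Fin s0) (Fin s0) ℂ := pathSumC s0 A z n (condU n)

/-- `Q^{(n)}(z)` (real). -/
noncomputable def QmatR (s0 : ℕ) (A : ℤ → ℤ → Matrix (Fin s0) (Fin s0) ℝ) (z : ℝ) (n : ℕ) :
    Matrix (Fin s0) (Fin s0) ℝ := pathSumR s0 A z n (condQ n)

/-- `D^{(n)}(z)` (real). -/
noncomputable def DmatR (s0 : ℕ) (A : ℤ → ℤ → Matrix (Fin s0) (Fin s0) ℝ) (z : ℝ) (n : ℕ) :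
    Matrix (Fin s0) (Fin s0) ℝ := pathSumR s0 A z n (condD n)

/-- `U^{(n)}(z)` (real). -/
noncomputable def UmatR (s0 : ℕ) (A : ℤ → ℤ → Matrix (Fin s0) (Fin s0) ℝ) (z : ℝ) (n : ℕ) :
    Matrix (Fin s0) (Fin s0) ℝ := pathSumR s0 A z n (condU n)

/-- `N1(z) = Σ_{n≥0} Q^{(n)}(z)`, entrywise (complex). -/
noncomputable def N1C (s0 : ℕ) (A : ℤ → ℤ → Matrix (Fin s0) (Fin s0) ℝ) (z : ℂ) :
    Matrix (Fin s0) (Fin s0) ℂ := Matrix.of fun i j => ∑' n : ℕ, QmatC s0 A z n i j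

/-- `G1(z) = Σ_{n≥1} D^{(n)}(z)`, entrywise (complex). -/
noncomputable def G1C (s0 : ℕ) (A : ℤ → ℤ → Matrix (Fin s0) (Fin s0) ℝ) (z : ℂ) :
    Matrix (Fin s0) (Fin s0) ℂ := Matrix.of fun i j => ∑' n : ℕ, DmatC s0 A z n i j

/-- `R1(z) = Σ_{n≥1} U^{(n)}(z)`, entrywise (complex). -/
noncomputable def R1C (s0 : ℕ) (A : ℤ → ℤ → Matrix (Fin s0) (Fin s0) ℝ) (z : ℂ) :
    Matrix (Fin s0) (Fin s0) ℂ := Matrix.of fun i j => ∑' n : ℕ, UmatC s0 A z n i j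

/-- `N1(z)` (real). -/
noncomputable def N1R (s0 : ℕ) (A : ℤ → ℤ → Matrix (Fin s0) (Fin s0) ℝ) (z : ℝ) :
    Matrix (Fin s0) (Fin s0) ℝ := Matrix.of fun i j => ∑' n : ℕ, QmatR s0 A z n i j

/-- `G1(z)` (real). -/
noncomputable def G1R (s0 : ℕ) (A : ℤ → ℤ → Matrix (Fin s0) (Fin s0) ℝ) (z : ℝ) :
    Matrix (Fin s0) (Fin s0) ℝ := Matrix.of fun i j => ∑' n : ℕ, DmatR s0 A z n i j

/-- `R1(z)` (real). -/
noncomputable def R1R (s0 : ℕ) (A : ℤ → ℤ → Matrix (Fin s0) (Fin s0) ℝ) (z : ℝ) :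
    Matrix (Fin s0) (Fin s0) ℝ := Matrix.of fun i j => ∑' n : ℕ, UmatR s0 A z n i j

/-- `C(z,w) = Σ_{i,j∈H} A_{i,j} z^i w^j` over `ℂ`. -/
noncomputable def CmatC (s0 : ℕ) (A : ℤ → ℤ → Matrix (Fin s0) (Fin s0) ℝ) (z w : ℂ) :
    Matrix (Fin s0) (Fin s0) ℂ :=
  ∑ i ∈ Hs, ∑ j ∈ Hs, (z ^ i * w ^ j) • (A i j).map Complex.ofReal

/-- `H1(z) = A_{*,0}(z) + A_{*,1}(z) N1(z) A_{*,-1}(z)` (complex). -/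
noncomputable def H1C (s0 : ℕ) (A : ℤ → ℤ → Matrix (Fin s0) (Fin s0) ℝ) (z : ℂ) :
    Matrix (Fin s0) (Fin s0) ℂ :=
  AstarC s0 A z 0 + AstarC s0 A z 1 * N1C s0 A z * AstarC s0 A z (-1)

/-- A matrix with row sums one and nonnegative entries. -/
def IsStochastic {n : ℕ} (M : Matrix (Fin n) (Fin n) ℝ) : Prop :=
  (∀ i j, 0 ≤ M i j) ∧ ∀ i, ∑ j, M i j = 1

end QBDSeries

/-!
Splitting a path from level `0` back to level `0` at its first step gives
`N1 = I + A_{*,0} N1 + A_{*,1} T`, where `T` sums over the paths from `0` to `-1` that never go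
below `-1`. Splitting such a path at its first visit to `-1` gives `T = N1 A_{*,-1} N1`, a Cauchy
product of two copies of the series `N1`, which converges absolutely because
`|Q⁽ⁿ⁾(z)| ≤ Q⁽ⁿ⁾(|z|)` entrywise. Hence `(I - H1(z)) N1(z) = I`, and a one-sided inverse of a
square matrix is two-sided.
-/

section LinftyOpNorm

attribute [local instance] Matrix.linftyOpNormedAddCommGroup

lemma Matrix.linfty_opNorm_le_sum_sum_norm {m n α : Type*} [Fintype m] [Fintype n]
    [NormedAddCommGroup α] (M : Matrix m n α) : ‖M‖ ≤ ∑ i, ∑ j, ‖M i j‖ := by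
  have hsup : (Finset.univ.sup fun i => ∑ j, ‖M i j‖₊) ≤ ∑ i, ∑ j, ‖M i j‖₊ :=
    Finset.sup_le fun i hi =>
      Finset.single_le_sum (f := fun i => ∑ j, ‖M i j‖₊) (fun _ _ => bot_le) hi
  simpa only [← coe_nnnorm, ← NNReal.coe_sum, NNReal.coe_le_coe, Matrix.linfty_opNNNorm_def]
    using hsup

end LinftyOpNorm

lemma Matrix.tsum_apply {ι m n R : Type*} [AddCommMonoid R] [TopologicalSpace R] [T2Space R]
    {f : ι → Matrix m n R} (hf : Summable f) (i : m) (j : n) :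
    (∑' x, f x) i j = ∑' x, f x i j :=
  (congrFun (_root_.tsum_apply hf (x := i)) j).trans (_root_.tsum_apply (Pi.summable.mp hf i))

lemma Matrix.norm_list_ofFn_prod_apply_le {ι α : Type*} [Fintype ι] [DecidableEq ι]
    [NormedRing α] [NormOneClass α] {n : ℕ} (F : Fin n → Matrix ι ι α) (G : Fin n → Matrix ι ι ℝ)
    (hFG : ∀ r k l, ‖F r k l‖ ≤ G r k l) (k l : ι) :
    ‖(List.ofFn F).prod k l‖ ≤ (List.ofFn G).prod k l := by
  induction n generalizing k with
  | zero => by_cases hkl : k = l <;> simp [hkl]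
  | succ n ih =>
    simp only [List.ofFn_succ, List.prod_cons, Matrix.mul_apply]
    refine (norm_sum_le _ _).trans (Finset.sum_le_sum fun u _ => ?_)
    exact (norm_mul_le _ _).trans (mul_le_mul (hFG 0 k u) (ih _ _ (fun r => hFG r.succ) u)
      (norm_nonneg _) ((norm_nonneg _).trans (hFG 0 k u)))

namespace QBDSeries

lemma psum_zero {n : ℕ} (σ : Fin n → ℤ) : psum σ 0 = 0 := by
  simp [psum]

lemma psum_cons_succ {n : ℕ} (x : ℤ) (τ : Fin n → ℤ) (k : ℕ) :
    psum (Fin.cons x τ : Fin (n + 1) → ℤ) (k + 1) = x + psum τ k := by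
  simp [psum, Finset.sum_filter, Fin.sum_univ_succ]

/-- The paths from level `0` to level `-m` that never go below `-m`. -/
def condLevel (m n : ℕ) (σ : Fin n → ℤ) : Prop :=
  (∀ k : ℕ, 1 ≤ k → k ≤ n - 1 → -(m : ℤ) ≤ psum σ k) ∧ psum σ n = -m

lemma condLevel_zero_iff {n : ℕ} (σ : Fin n → ℤ) : condLevel 0 n σ ↔ condQ n σ := by
  simp [condLevel, condQ]

lemma condLevel_cons_iff {m m' n : ℕ} {x : ℤ} (hx : -(m : ℤ) ≤ x) (hm' : (m' : ℤ) = m + x)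
    (τ : Fin n → ℤ) : condLevel m (n + 1) (Fin.cons x τ) ↔ condLevel m' n τ := by
  constructor
  · rintro ⟨hpath, hend⟩
    refine ⟨fun k hk1 hk2 => ?_, ?_⟩
    · have := hpath (k + 1) (by omega) (by omega)
      rw [psum_cons_succ] at this
      omega
    · rw [psum_cons_succ] at hend
      omega
  · rintro ⟨hpath, hend⟩
    refine ⟨fun k hk1 hk2 => ?_, by rw [psum_cons_succ, hend]; omega⟩
    obtain ⟨k, rfl⟩ : ∃ k', k = k' + 1 := ⟨k - 1, by omega⟩
    rw [psum_cons_succ]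
    rcases Nat.eq_zero_or_pos k with rfl | hk
    · rw [psum_zero]; omega
    · have := hpath k hk (by omega)
      omega

lemma not_condLevel_zero_cons_neg_one {n : ℕ} (τ : Fin n → ℤ) :
    ¬ condLevel 0 (n + 1) (Fin.cons (-1) τ) := by
  rintro ⟨hpath, hend⟩
  rcases n with _ | n
  · rw [psum_cons_succ, psum_zero] at hend
    omega
  · have hfirst := hpath (0 + 1) le_rfl (by omega)
    rw [psum_cons_succ, psum_zero] at hfirst
    omega

section PathSums

variable {s0 : ℕ} (A : ℤ → ℤ → Matrix (Fin s0) (Fin s0) ℝ) (z : ℂ)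

open Classical in
lemma pathSumC_congr {n : ℕ} {c c' : (Fin n → ℤ) → Prop} (h : ∀ τ, c τ ↔ c' τ) :
    pathSumC s0 A z n c = pathSumC s0 A z n c' :=
  Finset.sum_congr rfl fun _ _ => if_congr (h _) rfl rfl

open Classical in
lemma pathSumC_eq_zero {n : ℕ} {c : (Fin n → ℤ) → Prop} (h : ∀ τ, ¬ c τ) :
    pathSumC s0 A z n c = 0 :=
  Finset.sum_eq_zero fun _ _ => if_neg (h _)

open Classical in
lemma pathSumC_zero (c : (Fin 0 → ℤ) → Prop) :
    pathSumC s0 A z 0 c = if c Fin.elim0 then 1 else 0 := by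
  simp [pathSumC, Subsingleton.elim _ (Fin.elim0 : Fin 0 → ℤ)]

open Classical in
lemma pathSumC_succ {n : ℕ} (c : (Fin (n + 1) → ℤ) → Prop) :
    pathSumC s0 A z (n + 1) c =
      AstarC s0 A z (-1) * pathSumC s0 A z n (fun τ => c (Fin.cons (-1) τ)) +
      AstarC s0 A z 0 * pathSumC s0 A z n (fun τ => c (Fin.cons 0 τ)) +
      AstarC s0 A z 1 * pathSumC s0 A z n (fun τ => c (Fin.cons 1 τ)) := by
  have hsplit : pathSumC s0 A z (n + 1) c =
      ∑ x ∈ Hs, AstarC s0 A z x * pathSumC s0 A z n (fun τ => c (Fin.cons x τ)) := by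
    rw [pathSumC, ← (Fin.consEquiv fun _ => {x : ℤ // x ∈ Hs}).sum_comp, Fintype.sum_prod_type,
      ← Finset.sum_coe_sort Hs]
    refine Finset.sum_congr rfl fun x _ => ?_
    rw [pathSumC, Finset.mul_sum]
    refine Finset.sum_congr rfl fun τ _ => ?_
    have hcoe : (fun k => ((Fin.cons x τ : Fin (n + 1) → {x : ℤ // x ∈ Hs}) k : ℤ)) =
        Fin.cons (x : ℤ) (τ ·) := by
      funext k
      cases k using Fin.cases <;> simp
    simp [Fin.consEquiv_apply, List.ofFn_succ, hcoe, mul_ite]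
  rw [hsplit, Hs, Finset.sum_insert (by decide), Finset.sum_insert (by decide),
    Finset.sum_singleton, add_assoc]

noncomputable def levelMatC (m n : ℕ) : Matrix (Fin s0) (Fin s0) ℂ :=
  pathSumC s0 A z n (condLevel m n)

lemma QmatC_eq_levelMatC_zero (n : ℕ) : QmatC s0 A z n = levelMatC A z 0 n :=
  pathSumC_congr A z fun σ => (condLevel_zero_iff σ).symm

open Classical in
lemma levelMatC_zero_right (m : ℕ) : levelMatC A z m 0 = if m = 0 then 1 else 0 := by
  rw [levelMatC, pathSumC_zero]
  refine if_congr ⟨fun ⟨_, hend⟩ => by rw [psum_zero] at hend; omega,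
    fun hm => ⟨fun k hk1 hk2 => by omega, by simp [psum_zero, hm]⟩⟩ rfl rfl

lemma pathSumC_condLevel_cons {m m' n : ℕ} {x : ℤ} (hx : -(m : ℤ) ≤ x) (hm' : (m' : ℤ) = m + x) :
    pathSumC s0 A z n (fun τ => condLevel m (n + 1) (Fin.cons x τ)) = levelMatC A z m' n :=
  pathSumC_congr A z fun τ => condLevel_cons_iff hx hm' τ

lemma levelMatC_succ_succ (m n : ℕ) :
    levelMatC A z (m + 1) (n + 1) =
      AstarC s0 A z (-1) * levelMatC A z m n + AstarC s0 A z 0 * levelMatC A z (m + 1) n +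
        AstarC s0 A z 1 * levelMatC A z (m + 2) n := by
  show pathSumC s0 A z (n + 1) (condLevel (m + 1) (n + 1)) = _
  rw [pathSumC_succ, pathSumC_condLevel_cons A z (x := -1) (m' := m) (by omega) (by omega),
    pathSumC_condLevel_cons A z (x := 0) (m' := m + 1) (by omega) (by omega),
    pathSumC_condLevel_cons A z (x := 1) (m' := m + 2) (by omega) (by omega)]

lemma levelMatC_zero_succ (n : ℕ) :
    levelMatC A z 0 (n + 1) =
      AstarC s0 A z 0 * levelMatC A z 0 n + AstarC s0 A z 1 * levelMatC A z 1 n := by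
  show pathSumC s0 A z (n + 1) (condLevel 0 (n + 1)) = _
  rw [pathSumC_succ, pathSumC_eq_zero A z not_condLevel_zero_cons_neg_one, mul_zero, zero_add,
    pathSumC_condLevel_cons A z (x := 0) (m' := 0) (by omega) (by omega),
    pathSumC_condLevel_cons A z (x := 1) (m' := 1) (by omega) (by omega)]

-- Splitting at the first visit to level `-(j+1)`; the induction on `n` needs all `j` and `m`.
lemma levelMatC_add_add_one_succ (m n : ℕ) : ∀ j : ℕ,
    levelMatC A z (j + m + 1) (n + 1) =
      ∑ p ∈ Finset.HasAntidiagonal.antidiagonal n,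
        levelMatC A z j p.1 * AstarC s0 A z (-1) * levelMatC A z m p.2 := by
  induction n with
  | zero =>
    intro j
    rw [Finset.Nat.antidiagonal_zero, Finset.sum_singleton, levelMatC_succ_succ]
    rcases j with _ | j <;> rcases m with _ | m <;> simp [levelMatC_zero_right]
  | succ n ih =>
    intro j
    simp only [mul_assoc] at ih ⊢
    rw [Finset.Nat.sum_antidiagonal_succ]
    rcases j with _ | j
    · rw [levelMatC_zero_right, if_pos rfl, one_mul]
      rw [Finset.sum_congr rfl fun p _ => by rw [levelMatC_zero_succ]]
      simp only [add_mul, mul_assoc, Finset.sum_add_distrib, ← Finset.mul_sum, ← ih]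
      rw [zero_add, show 1 + m + 1 = m + 2 by omega, levelMatC_succ_succ A z m (n + 1), add_assoc]
    · rw [levelMatC_zero_right, if_neg j.succ_ne_zero, zero_mul, zero_add]
      rw [Finset.sum_congr rfl fun p _ => by rw [levelMatC_succ_succ]]
      simp only [add_mul, mul_assoc, Finset.sum_add_distrib, ← Finset.mul_sum, ← ih]
      rw [show j + 1 + m + 1 = j + m + 1 + 1 by omega, show j + 2 + m + 1 = j + m + 1 + 2 by omega,
        levelMatC_succ_succ A z (j + m + 1) (n + 1)]

end PathSums

section Bounds

variable {s0 : ℕ} {A : ℤ → ℤ → Matrix (Fin s0) (Fin s0) ℝ} {z : ℂ}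

lemma norm_AstarC_apply_le (hAnn : ∀ i j : ℤ, ∀ k l, 0 ≤ A i j k l) (i : ℤ) (k l : Fin s0) :
    ‖AstarC s0 A z i k l‖ ≤ AstarR s0 A ‖z‖ i k l := by
  simp only [AstarC, AstarR, Matrix.sum_apply, Matrix.smul_apply, Matrix.map_apply, smul_eq_mul]
  refine (norm_sum_le _ _).trans (Finset.sum_le_sum fun j _ => ?_)
  rw [norm_mul, norm_zpow, Complex.norm_real, Real.norm_of_nonneg (hAnn j i k l)]

lemma norm_pathSumC_apply_le (hAnn : ∀ i j : ℤ, ∀ k l, 0 ≤ A i j k l) {n : ℕ}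
    (c : (Fin n → ℤ) → Prop) (k l : Fin s0) :
    ‖pathSumC s0 A z n c k l‖ ≤ pathSumR s0 A ‖z‖ n c k l := by
  simp only [pathSumC, pathSumR, Matrix.sum_apply]
  refine (norm_sum_le _ _).trans (Finset.sum_le_sum fun σ _ => ?_)
  split_ifs
  · exact Matrix.norm_list_ofFn_prod_apply_le _ _ (fun r => norm_AstarC_apply_le hAnn _) k l
  · simp

end Bounds

variable {s0 : ℕ} (A : ℤ → ℤ → Matrix (Fin s0) (Fin s0) ℝ) (z : ℂ)

lemma N1C_eq_tsum (h : Summable (levelMatC A z 0)) :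
    N1C s0 A z = ∑' n, levelMatC A z 0 n := by
  ext i j
  rw [N1C, Matrix.of_apply, Matrix.tsum_apply h]
  exact tsum_congr fun n => by rw [QmatC_eq_levelMatC_zero]

section CauchyProduct

-- The ℓ∞-operator norm makes square matrices a complete normed ring, as the Cauchy product needs.
attribute [local instance] Matrix.linftyOpNormedAddCommGroup Matrix.linftyOpNormedRing
  Matrix.linftyOpNormedAlgebra

lemma summable_norm_levelMatC_zero (hAnn : ∀ i j : ℤ, ∀ k l, 0 ≤ A i j k l)
    (hN : ∀ i j, Summable fun n : ℕ => QmatR s0 A ‖z‖ n i j) :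
    Summable fun n => ‖levelMatC A z 0 n‖ := by
  refine Summable.of_nonneg_of_le (f := fun n => ∑ i, ∑ j, QmatR s0 A ‖z‖ n i j)
    (fun n => norm_nonneg _) (fun n => ?_) (summable_sum fun i _ => summable_sum fun j _ => hN i j)
  rw [← QmatC_eq_levelMatC_zero]
  exact (Matrix.linfty_opNorm_le_sum_sum_norm _).trans
    (Finset.sum_le_sum fun i _ => Finset.sum_le_sum fun j _ => norm_pathSumC_apply_le hAnn _ i j)

lemma hasSum_levelMatC_one (h : Summable fun n => ‖levelMatC A z 0 n‖) :
    HasSum (levelMatC A z 1)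
      ((∑' n, levelMatC A z 0 n) * AstarC s0 A z (-1) * ∑' n, levelMatC A z 0 n) := by
  have hleft : Summable fun n => ‖levelMatC A z 0 n * AstarC s0 A z (-1)‖ :=
    Summable.of_nonneg_of_le (fun n => norm_nonneg _) (fun n => norm_mul_le _ _)
      (h.mul_right _)
  have hconv := (summable_norm_sum_mul_antidiagonal_of_summable_norm hleft h).of_norm.hasSum
  rw [← tsum_mul_tsum_eq_tsum_sum_antidiagonal_of_summable_norm hleft h,
    h.of_norm.tsum_mul_right] at hconv
  have hshift := (hasSum_nat_add_iff 1).mp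
    (hconv.congr_fun fun n => levelMatC_add_add_one_succ A z 0 n 0)
  rw [Finset.sum_range_one, levelMatC_zero_right] at hshift
  simp only [zero_add, one_ne_zero, if_false, add_zero] at hshift
  exact hshift

lemma N1C_eq_one_add (hAnn : ∀ i j : ℤ, ∀ k l, 0 ≤ A i j k l)
    (hN : ∀ i j, Summable fun n : ℕ => QmatR s0 A ‖z‖ n i j) :
    N1C s0 A z = 1 + AstarC s0 A z 0 * N1C s0 A z +
      AstarC s0 A z 1 * (N1C s0 A z * AstarC s0 A z (-1) * N1C s0 A z) := by
  have hnorm := summable_norm_levelMatC_zero A z hAnn hN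
  have hsum : Summable (levelMatC A z 0) := hnorm.of_norm
  rw [N1C_eq_tsum A z hsum]
  have hstep := ((hsum.hasSum.mul_left (AstarC s0 A z 0)).add
    ((hasSum_levelMatC_one A z hnorm).mul_left (AstarC s0 A z 1))).congr_fun
    (levelMatC_zero_succ A z)
  have hfirst := (hasSum_nat_add_iff 1).mp hstep
  rw [Finset.sum_range_one, levelMatC_zero_right, if_pos rfl] at hfirst
  exact hfirst.tsum_eq.trans (by abel)

end CauchyProduct

lemma one_sub_H1C_mul_N1C (hAnn : ∀ i j : ℤ, ∀ k l, 0 ≤ A i j k l)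
    (hN : ∀ i j, Summable fun n : ℕ => QmatR s0 A ‖z‖ n i j) :
    (1 - H1C s0 A z) * N1C s0 A z = 1 := by
  have h := N1C_eq_one_add A z hAnn hN
  rw [H1C, sub_mul, one_mul]
  nth_rewrite 1 [h]
  noncomm_ring

end QBDSeries

open QBDSeries in
theorem statement11_general
    (s0 : ℕ)
    (A : ℤ → ℤ → Matrix (Fin s0) (Fin s0) ℝ)
    (hAnn : ∀ i j : ℤ, ∀ k l, 0 ≤ A i j k l)
    (z : ℂ)
    (hN : ∀ i j, Summable fun n : ℕ => QmatR s0 A ‖z‖ n i j) :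
    IsUnit (1 - H1C s0 A z) ∧ IsUnit (N1C s0 A z) ∧
      N1C s0 A z = (1 - H1C s0 A z)⁻¹ := by
  have h := one_sub_H1C_mul_N1C A z hAnn hN
  exact ⟨IsUnit.of_mul_eq_one _ h, IsUnit.of_mul_eq_one _ (mul_eq_one_comm.mp h),
    (Matrix.inv_eq_right_inv h).symm⟩

open QBDSeries in
/-- `I − H1(z)` and `N1(z)` are invertible and `N1(z) = (I − H1(z))⁻¹`. -/
theorem statement11
    (s0 : ℕ) (hs0 : 1 ≤ s0)
    (A : ℤ → ℤ → Matrix (Fin s0) (Fin s0) ℝ)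
    (hAsupp : ∀ i j : ℤ, ¬(i ∈ Hs ∧ j ∈ Hs) → A i j = 0)
    (hAnn : ∀ i j : ℤ, ∀ k l, 0 ≤ A i j k l)
    (hAst : IsStochastic (∑ i ∈ Hs, ∑ j ∈ Hs, A i j))
    (z : ℂ) (hz : z ≠ 0)
    (hN : ∀ i j, Summable fun n : ℕ => QmatR s0 A ‖z‖ n i j)
    (hG : ∀ i j, Summable fun n : ℕ => DmatR s0 A ‖z‖ n i j)
    (hR : ∀ i j, Summable fun n : ℕ => UmatR s0 A ‖z‖ n i j) :
    IsUnit (1 - H1C s0 A z) ∧ IsUnit (N1C s0 A z) ∧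
      N1C s0 A z = (1 - H1C s0 A z)⁻¹ :=
  statement11_general s0 A hAnn z hN
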